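/- The formal adjoint of the Eulerian-Lagrangian derivative ∇_A^i satisfies (∇_A^i)^* g = −∇_A^i g + Q_{ji} C_{p,j;p} g, where (∇_A^i)^* g = −∂_j(Q_{ji} g). -/

import Mathlib

open scoped BigOperators

noncomputable section

/-- Spatial partial derivative `∂_i f` of a scalar function on `ℝ³`. -/
def pd (i : Fin 3) (f : (Fin 3 → ℝ) → ℝ) (x : Fin 3 → ℝ) : ℝ :=
  fderiv ℝ f x (Pi.single i 1)

lemma pd_mul {f h : (Fin 3 → ℝ) → ℝ} {x : Fin 3 → ℝ}
    (hf : DifferentiableAt ℝ f x) (hh : DifferentiableAt ℝ h x) (j : Fin 3) :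
    pd j (fun y => f y * h y) x = pd j f x * h x + f x * pd j h x := by
  unfold pd
  rw [fderiv_fun_mul hf hh]
  simp; ring

lemma pd_sum {ι : Type*} (s : Finset ι) (f : ι → (Fin 3 → ℝ) → ℝ) {x : Fin 3 → ℝ}
    (hf : ∀ k ∈ s, DifferentiableAt ℝ (f k) x) (j : Fin 3) :
    pd j (fun y => ∑ k ∈ s, f k y) x = ∑ k ∈ s, pd j (f k) x := by
  unfold pd
  rw [fderiv_fun_sum hf]
  simp

/-- The formal adjoint of `∇_A^i` satisfies
`(∇_A^i)^* g = −∂_j(Q_{ji} g) = −∇_A^i g + Q_{ji} C_{p,j;p} g`, with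
`C_{m,k;i} = Q_{ji} ∂_j ∂_k A_m`. -/
theorem nablaA_formal_adjoint
    (A : (Fin 3 → ℝ) → Fin 3 → ℝ)
    (hA : ContDiff ℝ (⊤ : ℕ∞) A)
    (Q : (Fin 3 → ℝ) → Fin 3 → Fin 3 → ℝ)
    (hQsmooth : ContDiff ℝ (⊤ : ℕ∞) Q)
    (hQ1 : ∀ (x : Fin 3 → ℝ) (m p : Fin 3),
      ∑ j, Q x j m * pd j (fun y => A y p) x = if m = p then (1:ℝ) else 0)
    (hQ2 : ∀ (x : Fin 3 → ℝ) (m p : Fin 3),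
      ∑ j, pd m (fun y => A y j) x * Q x p j = if m = p then (1:ℝ) else 0)
    (g : (Fin 3 → ℝ) → ℝ) (hg : ContDiff ℝ (⊤ : ℕ∞) g) :
    ∀ (x : Fin 3 → ℝ) (i : Fin 3),
      - ∑ j, pd j (fun y => Q y j i * g y) x =
        - (∑ j, Q x j i * pd j g x)
          + (∑ j, Q x j i
              * (∑ p, ∑ a, Q x a p * pd a (fun y => pd j (fun z => A z p) y) x))
            * g x := by
  intro x i
  have hQc : ∀ j m, ContDiff ℝ (⊤ : ℕ∞) (fun y => Q y j m) := fun j m =>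
    contDiff_pi.mp (contDiff_pi.mp hQsmooth j) m
  have hAc : ∀ p, ContDiff ℝ (⊤ : ℕ∞) (fun y => A y p) := fun p => contDiff_pi.mp hA p
  have hpdA : ∀ j p, ContDiff ℝ (⊤ : ℕ∞) (fun y => pd j (fun z => A z p) y) := by
    intro j p
    have : ContDiff ℝ (⊤ : ℕ∞) (fun y => fderiv ℝ (fun z => A z p) y) :=
      (hAc p).fderiv_right (by simp)
    exact this.clm_apply contDiff_const
  have hQd : ∀ j m, DifferentiableAt ℝ (fun y => Q y j m) x := fun j m =>
    ((hQc j m).differentiable (by simp)).differentiableAt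
  have hpdAd : ∀ j p, DifferentiableAt ℝ (fun y => pd j (fun z => A z p) y) x := fun j p =>
    ((hpdA j p).differentiable (by simp)).differentiableAt
  have hgd : DifferentiableAt ℝ g x := (hg.differentiable (by simp)).differentiableAt
  -- Differentiating hQ1 at x in direction a:
  have hE : ∀ a m p : Fin 3,
      (∑ j, pd a (fun y => Q y j m) x * pd j (fun z => A z p) x)
        + (∑ j, Q x j m * pd a (fun y => pd j (fun z => A z p) y) x) = 0 := by
    intro a m p
    have hconst : pd a (fun y => ∑ j, Q y j m * pd j (fun z => A z p) y) x = 0 := by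
      have heq : (fun y => ∑ j, Q y j m * pd j (fun z => A z p) y)
          = fun _ => (if m = p then (1:ℝ) else 0) := funext fun y => hQ1 y m p
      rw [heq]
      simp [pd]
    rw [pd_sum _ (fun j y => Q y j m * pd j (fun z => A z p) y) (fun j _ => (hQd j m).mul (hpdAd j p)) a] at hconst
    have hexp : ∀ j : Fin 3,
        pd a (fun y => Q y j m * pd j (fun z => A z p) y) x
          = pd a (fun y => Q y j m) x * pd j (fun z => A z p) x
            + Q x j m * pd a (fun y => pd j (fun z => A z p) y) x :=
      fun j => pd_mul (hQd j m) (hpdAd j p) a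
    rw [Finset.sum_congr rfl (fun j _ => hexp j), Finset.sum_add_distrib] at hconst
    exact hconst
  -- the key formula for derivatives of Q
  have hdQ : ∀ a k m : Fin 3,
      pd a (fun y => Q y k m) x
        = -∑ p, ∑ j, Q x j m * pd a (fun y => pd j (fun z => A z p) y) x * Q x k p := by
    intro a k m
    have h1 : ∀ p : Fin 3,
        ∑ j, pd a (fun y => Q y j m) x * pd j (fun z => A z p) x
          = -∑ j, Q x j m * pd a (fun y => pd j (fun z => A z p) y) x := by
      intro p
      have := hE a m p
      linarith
    calc pd a (fun y => Q y k m) x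
        = ∑ j, pd a (fun y => Q y j m) x * (if j = k then (1:ℝ) else 0) := by
          simp
      _ = ∑ j, pd a (fun y => Q y j m) x * (∑ p, pd j (fun z => A z p) x * Q x k p) := by
          refine Finset.sum_congr rfl fun j _ => ?_
          rw [hQ2 x j k]
      _ = ∑ p, (∑ j, pd a (fun y => Q y j m) x * pd j (fun z => A z p) x) * Q x k p := by
          simp only [Finset.mul_sum, Finset.sum_mul]
          rw [Finset.sum_comm]
          simp [mul_assoc]
      _ = ∑ p, (-∑ j, Q x j m * pd a (fun y => pd j (fun z => A z p) y) x) * Q x k p := by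
          refine Finset.sum_congr rfl fun p _ => ?_
          rw [h1 p]
      _ = -∑ p, ∑ j, Q x j m * pd a (fun y => pd j (fun z => A z p) y) x * Q x k p := by
          rw [← Finset.sum_neg_distrib]
          refine Finset.sum_congr rfl fun p _ => ?_
          rw [neg_mul, Finset.sum_mul]
  -- product rule in the goal
  have hprod : ∀ j : Fin 3,
      pd j (fun y => Q y j i * g y) x
        = pd j (fun y => Q y j i) x * g x + Q x j i * pd j g x :=
    fun j => pd_mul (hQd j i) hgd j
  simp only [hprod, hdQ]
  simp only [Fin.sum_univ_three]
  ring
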